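/- arXiv:2210.16729 — 2 statements merged into one kernel-verified Lean document; each statement's English description precedes it below -/
import Mathlib

section
/- Let g = ⊕_{j∈(1/2)ℤ} g_j be a good grading for a nilpotent even element f ∈ g_{-1} of a finite-dimensional Lie superalgebra g with invariant even supersymmetric form (·|·), and let χ(u) = (f|u). Then the bilinear form on g_{1/2} defined by (u,v) ↦ χ([u,v]) is nondegenerate and super-skew-symmetric. -/
/-!
STATEMENT 5: For a good (1/2)ℤ-grading g = ⊕ g_j of a finite-dimensional Lie
superalgebra g with invariant even supersymmetric nondegenerate form, and f ∈ g_{-1}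
even nilpotent with χ(u) = (f|u), the bilinear form (u,v) ↦ χ([u,v]) on g_{1/2}
is nondegenerate and super-skew-symmetric.  Grading degrees are indexed by ℚ.
-/

namespace Stmt5

theorem stmt5 (V : Type*) [AddCommGroup V] [Module ℂ V] [FiniteDimensional ℂ V]
    (br : V →ₗ[ℂ] V →ₗ[ℂ] V)      -- the Lie superbracket
    (B : V →ₗ[ℂ] V →ₗ[ℂ] ℂ)       -- the invariant form (·|·)
    (V0 V1 : Submodule ℂ V)        -- even and odd parts
    (hV : V0 ⊔ V1 = ⊤ ∧ V0 ⊓ V1 = ⊥)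
    -- super-skew-symmetry of the bracket on homogeneous elements
    (hskew_oo : ∀ u ∈ V1, ∀ v ∈ V1, br u v = br v u)
    (hskew_e : ∀ u v : V, (u ∈ V0 ∨ v ∈ V0) → br u v = - br v u)
    -- the form: supersymmetric, even, invariant, nondegenerate
    (hBsymm : ∀ u ∈ V0, ∀ v : V, B u v = B v u)
    (hBinv : ∀ u v w : V, B (br u v) w = B u (br v w))
    (hBnd : ∀ u : V, (∀ v : V, B u v = 0) → u = 0)
    -- the good grading
    (g : ℚ → Submodule ℂ V)
    (hgr_sum : (⨆ j, g j) = ⊤)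
    (hgr_indep : iSupIndep g)
    (hgr_br : ∀ i j : ℚ, ∀ u ∈ g i, ∀ v ∈ g j, br u v ∈ g (i + j))
    (f : V) (hf : f ∈ g (-1)) (hf_even : f ∈ V0)
    (hinj : ∀ j : ℚ, (1/2 : ℚ) ≤ j → ∀ u ∈ g j, br f u = 0 → u = 0)
    (hsurj : ∀ j : ℚ, j ≤ (1/2 : ℚ) → ∀ w ∈ g (j - 1), ∃ u ∈ g j, br f u = w)
    (horth : ∀ i j : ℚ, i + j ≠ 0 → ∀ u ∈ g i, ∀ v ∈ g j, B u v = 0) :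
    -- χ([u,v]) with χ = (f|·) is nondegenerate on g_{1/2} …
    (∀ u ∈ g (1/2 : ℚ), (∀ v ∈ g (1/2 : ℚ), B f (br u v) = 0) → u = 0) ∧
    -- … and super-skew-symmetric: χ[u,v] = -(-1)^{p(u)p(v)} χ[v,u]
    (∀ u ∈ g (1/2 : ℚ), ∀ v ∈ g (1/2 : ℚ),
      ((u ∈ V1 ∧ v ∈ V1) → B f (br u v) = B f (br v u)) ∧
      ((u ∈ V0 ∨ v ∈ V0) → B f (br u v) = - B f (br v u))) := by
  constructor
  · intro u hu h
    refine hinj (1/2) le_rfl u hu ?_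
    apply hBnd
    intro v
    have hfu : br f u ∈ g (-1/2 : ℚ) := by
      have := hgr_br (-1) (1/2) f hf u hu
      norm_num at this
      convert this using 2
      norm_num
    have hv : v ∈ (⨆ j, g j) := hgr_sum ▸ Submodule.mem_top
    have hker : (⨆ j, g j) ≤ LinearMap.ker (B (br f u)) := by
      refine iSup_le fun j w hw => ?_
      simp only [LinearMap.mem_ker]
      rcases eq_or_ne j (1/2 : ℚ) with rfl | hj
      · rw [hBinv f u w]
        exact h w hw
      · exact horth (-1/2) j (by
          intro hc
          apply hj
          linarith) (br f u) hfu w hw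
    exact hker hv
  · intro u hu v hv
    constructor
    · intro ⟨hu1, hv1⟩
      rw [hskew_oo u hu1 v hv1]
    · intro he
      rw [hskew_e u v he]
      simp

end Stmt5
end

section
/- Let λ ∈ h* for g = osp(1|2n) and let χ_λ: Z(g) → ℂ be the central character defined via the Harish-Chandra homomorphism. Then χ_λ(T²) = ∏_{i=1}^{n} ((λ+ρ)(h_i))², where T is the Casimir ghost with (σ∘η)(T²) = h_1²⋯h_n². In particular χ_λ(T²) = 0 if and only if (λ+ρ|α) = 0 for some odd root α. -/
/-!
STATEMENT 15: For λ ∈ h*, the central character χ_λ of osp(1|2n) satisfies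
χ_λ(T²) = ∏_{i=1}^n ((λ+ρ)(h_i))², where T is the Casimir ghost with
(σ∘η)(T²) = h_1²⋯h_n²; in particular χ_λ(T²) = 0 iff (λ+ρ|α) = 0 for some odd
root α (equivalently (λ+ρ)(h_i) = 0 for some i).  Weights are recorded by
their values λ(h_i); U(h) = ℂ[h*] is the polynomial algebra with h_i ↦ X i;
χ_λ(z) = (η z)(λ); ρ(h_i) = n - i + 1/2 (1-based), i.e. n - i - 1/2 for
i : Fin n; σ is the ρ-shift σ(f)(λ) = f(λ - ρ); q = η(T²).
-/

open MvPolynomial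

namespace Stmt15

theorem stmt15 (n : ℕ)
    (σ : MvPolynomial (Fin n) ℂ →ₐ[ℂ] MvPolynomial (Fin n) ℂ)
    (hσ : ∀ i : Fin n, σ (X i) = X i - C ((n : ℂ) - (i : ℕ) - 1/2))
    (q : MvPolynomial (Fin n) ℂ)          -- q = η(T²)
    (hq : σ q = ∏ i, (X i) ^ 2) :         -- (σ∘η)(T²) = h_1²⋯h_n²
    ∀ lam : Fin n → ℂ,
      (eval lam q = ∏ i, (lam i + ((n : ℂ) - (i : ℕ) - 1/2)) ^ 2) ∧
      (eval lam q = 0 ↔ ∃ i : Fin n, lam i + ((n : ℂ) - (i : ℕ) - 1/2) = 0) := by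
  intro lam
  have key : ∀ μ : Fin n → ℂ, eval μ (σ q) = eval (fun i => μ i - ((n : ℂ) - (i : ℕ) - 1/2)) q := by
    intro μ
    have h : (aeval μ : MvPolynomial (Fin n) ℂ →ₐ[ℂ] ℂ).comp σ =
        aeval (fun i => μ i - ((n : ℂ) - (i : ℕ) - 1/2)) := by
      apply MvPolynomial.algHom_ext
      intro i
      simp [hσ i]
    have := congrArg (fun f => f q) h
    simp only [AlgHom.coe_comp, Function.comp_apply] at this
    simp only [← coe_aeval_eq_eval, RingHom.coe_coe]
    exact this
  have h1 : eval lam q = ∏ i, (lam i + ((n : ℂ) - (i : ℕ) - 1/2)) ^ 2 := by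
    have := key (fun i => lam i + ((n : ℂ) - (i : ℕ) - 1/2))
    simp only [add_sub_cancel_right] at this
    rw [hq] at this
    rw [← this]
    simp
  refine ⟨h1, ?_⟩
  rw [h1]
  rw [Finset.prod_eq_zero_iff]
  simp [pow_eq_zero_iff]

end Stmt15
end
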